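/- arXiv:2310.13796 — 2 statements merged into one kernel-verified Lean document; each statement's English description precedes it below -/
import Mathlib

section
/- Assume I is Markov and causally minimal with respect to the causal graph D, and that faithfulness fails, i.e., I(D) ⊊ I. Then the failure of faithfulness is detectable: there is no directed graph D' such that I = I(D'). -/
variable {V : Type*}

/-- A walk in a directed graph given by edge relation `E`. Each step either
traverses an edge forward (head at the next node) or backward (head at the
current node). -/
inductive Walk (E : V → V → Prop) : V → V → Type _
  | nil (a : V) : Walk E a a
  | fwd {a b c : V} (h : E a b) (w : Walk E b c) : Walk E a c
  | bwd {a b c : V} (h : E b a) (w : Walk E b c) : Walk E a c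

namespace Walk

variable {E : V → V → Prop}

def length : ∀ {a b : V}, Walk E a b → ℕ
  | _, _, nil _ => 0
  | _, _, fwd _ w => w.length + 1
  | _, _, bwd _ w => w.length + 1

def nodes : ∀ {a b : V}, Walk E a b → List V
  | a, _, nil _ => [a]
  | a, _, fwd _ w => a :: w.nodes
  | a, _, bwd _ w => a :: w.nodes

/-- The nonendpoint (interior) nodes of a walk. -/
def inner {a b : V} (w : Walk E a b) : List V := (w.nodes.drop 1).dropLast

/-- Colliders of a walk; the boolean records whether the previous edge has a
head at the current node. -/
def collidersAux : ∀ {a b : V}, Walk E a b → Bool → List V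
  | _, _, nil _, _ => []
  | _, _, fwd _ w, _ => w.collidersAux true
  | a, _, bwd _ w, prev => (if prev then [a] else []) ++ w.collidersAux false

/-- The list of collider nodes of a walk. -/
def colliders {a b : V} (w : Walk E a b) : List V := w.collidersAux false

/-- Whether the final edge of the walk has a head at the last node; the boolean
argument is the value returned for the trivial walk. -/
def lastHead : ∀ {a b : V}, Walk E a b → Bool → Bool
  | _, _, nil _, cur => cur
  | _, _, fwd _ w, _ => w.lastHead true
  | _, _, bwd _ w, _ => w.lastHead false

/-- A directed walk: every edge points towards the final node. -/
def directed : ∀ {a b : V}, Walk E a b → Prop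
  | _, _, nil _ => True
  | _, _, fwd _ w => w.directed
  | _, _, bwd _ _ => False

/-- A path is a walk with no repeated nodes. -/
def isPath {a b : V} (w : Walk E a b) : Prop := w.nodes.Nodup

end Walk

/-- `a` is an ancestor of the set `C`: there is a (possibly trivial) directed
walk from `a` to some node of `C`. -/
def ancestorOf (E : V → V → Prop) (a : V) (C : Set V) : Prop :=
  ∃ c ∈ C, Relation.ReflTransGen E a c

/-- Conditions on the nonendpoint nodes of a walk for μ-connectedness:
every collider is an ancestor of `C` and no noncollider is in `C`. The boolean
records whether the previous edge has a head at the current node. -/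
def Walk.innerOK (E : V → V → Prop) (C : Set V) : ∀ {a b : V}, Walk E a b → Bool → Prop
  | _, _, .nil _, _ => True
  | a, _, .fwd _ w, _ => a ∉ C ∧ Walk.innerOK E C w true
  | a, _, .bwd _ w, prev =>
      (if prev then ancestorOf E a C else a ∉ C) ∧ Walk.innerOK E C w false

/-- A walk is μ-connecting given `C` if it is nontrivial, its first node is not
in `C`, all colliders are ancestors of `C`, no noncolliders are in `C`, and the
final edge has a head at the last node. -/
def Walk.muConn (E : V → V → Prop) (C : Set V) : ∀ {a b : V}, Walk E a b → Prop
  | a, _, .nil _ => False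
  | a, _, .fwd _ w => a ∉ C ∧ Walk.innerOK E C w true ∧ w.lastHead true = true
  | a, _, .bwd _ w => a ∉ C ∧ Walk.innerOK E C w false ∧ w.lastHead false = true

/-- μ-separation: `B` is μ-separated from `A` given `C` if there is no
μ-connecting walk from a node of `A \ C` to a node of `B` given `C`. -/
def muSep (E : V → V → Prop) (A B C : Set V) : Prop :=
  ¬ ∃ a ∈ A \ C, ∃ b ∈ B, ∃ w : Walk E a b, Walk.muConn E C w

/-- An independence model over `V` is a set of triples of subsets of `V`. -/
abbrev IndepModel (V : Type*) := Set (Set V × Set V × Set V)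

/-- The independence model of all μ-separations of the graph with edges `E`. -/
def ID (E : V → V → Prop) : IndepModel V := {t | muSep E t.1 t.2.1 t.2.2}

/-- Transitive closedness of `I` with respect to the graph `E`:
conditions D0–D3 hold for every edge and every set `C`. -/
def TransClosed (I : IndepModel V) (E : V → V → Prop) : Prop :=
  ∀ (C : Set V) (α β : V), E α β →
    (α ∉ C → ({α}, {β}, C) ∉ I) ∧
    (α ∉ C → ∀ γ, ¬ muSep E {γ} {α} C → ({γ}, {β}, C) ∉ I) ∧
    (α ∉ C → β ∈ C → ∀ γ δ, ¬ muSep E {γ} {β} C → ¬ muSep E {α} {δ} C →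
      ({γ}, {δ}, C) ∉ I) ∧
    (α ∉ C → ∀ γ, ¬ muSep E {α} {γ} C → ({β}, {γ}, C) ∉ I)

def LeftDecomp (I : IndepModel V) : Prop :=
  ∀ A B C D : Set V, (A, B, C) ∈ I → D ⊆ A → (D, B, C) ∈ I

def RightDecomp (I : IndepModel V) : Prop :=
  ∀ A B C D : Set V, (A, B, C) ∈ I → D ⊆ B → (A, D, C) ∈ I

def LeftWeakUnion (I : IndepModel V) : Prop :=
  ∀ A B C D : Set V, (A, B, C) ∈ I → D ⊆ A → (A, B, C ∪ D) ∈ I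

def LeftContraction (I : IndepModel V) : Prop :=
  ∀ A B C D : Set V, (A, B, C) ∈ I → (D, B, A ∪ C) ∈ I → (A ∪ D, B, C) ∈ I

/-- `I` is causally minimal with respect to `E`: it is Markov with respect to
`E` and not Markov with respect to any proper subgraph. -/
def CausallyMinimal (I : IndepModel V) (E : V → V → Prop) : Prop :=
  ID E ⊆ I ∧ ∀ E' : V → V → Prop, (∀ a b, E' a b → E a b) → E' ≠ E → ¬ ID E' ⊆ I

/-- The pairwise Markov property of `I` with respect to the graph `G`. -/
def PairwiseMarkov (I : IndepModel V) (G : V → V → Prop) : Prop :=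
  ∀ α β : V, ¬ G α β → ({α}, {β}, (Set.univ \ {α} : Set V)) ∈ I

/-- The set of parents of `β` in the graph `E` (excluding `β` itself). -/
def pa (E : V → V → Prop) (β : V) : Set V := {γ | E γ β ∧ γ ≠ β}

section Aux

variable {V : Type*}

/-- Key inner lemma: for `C = univ \ {α}`, any tail of a connecting walk with a
head at its end forces an edge `E α b`. -/
lemma walk_edge {E : V → V → Prop} {α : V} :
    ∀ {x b : V} (w : Walk E x b) (prev : Bool),
      Walk.innerOK E (Set.univ \ {α}) w prev → w.lastHead prev = true →
      (prev = true → E α x) → E α b := by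
  intro x b w
  induction w with
  | nil a =>
    intro prev hok hlast hprev
    exact hprev (by simpa [Walk.lastHead] using hlast)
  | @fwd x y b h w ih =>
    intro prev hok hlast _
    obtain ⟨hx, hok'⟩ := hok
    have hxα : x = α := by
      by_contra hne
      exact hx ⟨trivial, hne⟩
    exact ih true hok' hlast (fun _ => hxα ▸ h)
  | bwd h w ih =>
    intro prev hok hlast _
    exact ih false hok.2 hlast (by simp)

lemma muSep_of_not_edge {E : V → V → Prop} {α β : V} (h : ¬ E α β) :
    muSep E {α} {β} (Set.univ \ {α}) := by
  rintro ⟨a, ⟨ha, -⟩, b, hb, w, hw⟩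
  rw [Set.mem_singleton_iff] at ha hb
  subst ha; subst hb
  cases w with
  | nil => exact hw
  | fwd h' w' =>
    obtain ⟨-, hok, hlast⟩ := hw
    exact h (walk_edge w' true hok hlast (fun _ => h'))
  | bwd h' w' =>
    obtain ⟨-, hok, hlast⟩ := hw
    exact h (walk_edge w' false hok hlast (by simp))

lemma not_muSep_of_edge {E : V → V → Prop} {α β : V} (h : E α β) :
    ¬ muSep E {α} {β} (Set.univ \ {α}) := by
  intro hs
  exact hs ⟨α, ⟨rfl, fun hc => hc.2 rfl⟩, β, rfl, Walk.fwd h (Walk.nil β),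
    fun hc => hc.2 rfl, trivial, rfl⟩

/-- `ID E₁ ⊆ ID E₂` implies `E₂ ⊆ E₁` for graphs with all self-edges. -/
lemma edge_sub_of_ID_sub {E₁ E₂ : V → V → Prop} (hself : ∀ v, E₁ v v)
    (hsub : ID E₁ ⊆ ID E₂) : ∀ a b, E₂ a b → E₁ a b := by
  intro a b hab
  by_contra hne
  have hmem : ({a}, {b}, (Set.univ \ {a} : Set V)) ∈ ID E₁ :=
    muSep_of_not_edge hne
  exact not_muSep_of_edge hab (hsub hmem)

end Aux

/-- if `I` is Markov and causally minimal with respect to `D`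
and faithfulness fails (`I(D) ⊊ I`), then the failure is detectable: no
directed graph `D'` satisfies `I = I(D')`. -/
theorem stmt11 {V : Type*} (I : IndepModel V) (E : V → V → Prop)
    (hself : ∀ v, E v v)
    (hMarkov : ID E ⊆ I) (hmin : CausallyMinimal I E)
    (hfail : ID E ≠ I) :
    ¬ ∃ E' : V → V → Prop, (∀ v, E' v v) ∧ I = ID E' := by
  rintro ⟨E', hself', hI⟩
  have hsub1 : ID E ⊆ ID E' := hI ▸ hMarkov
  have hE'E : ∀ a b, E' a b → E a b := edge_sub_of_ID_sub hself hsub1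
  by_cases heq : E' = E
  · exact hfail (heq ▸ hI.symm)
  · exact hmin.2 E' hE'E heq (hI ▸ Set.Subset.rfl)
end

section
/- Assume the directed graph D is of order at most m (i.e., for all ordered pairs (α,β) with finite order, o(α,β,D) ≤ m) and that the independence model I is Markov with respect to D (I(D) ⊆ I). Then the output of the dSGS algorithm with parameter k = m — the graph containing edge α → β iff there is no set C ⊆ V∖{α} with |C| ≤ m and (α,β,C) ∈ I — is a subgraph of D. -/
variable {V : Type*}

/-- The order of the ordered pair `(α, β)` relative to the graph `E`. -/
noncomputable def order {V : Type*} (E : V → V → Prop) (α β : V) : ℕ∞ :=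
  ⨅ C ∈ {C : Set V | C ⊆ {α}ᶜ ∧ muSep E {α} {β} C}, (C.ncard : ℕ∞)

private lemma walk_aux {E : V → V → Prop} {β : V} :
    ∀ {a : V} (w : Walk E a β) (prev : Bool),
      Walk.innerOK E {γ | E γ β} w prev → w.lastHead prev = true →
      a = β ∧ prev = true := by
  intro a w
  induction w with
  | nil a => intro prev _ h2; exact ⟨rfl, h2⟩
  | fwd h w ih =>
    intro prev hok hl
    obtain ⟨hb, _⟩ := ih true hok.2 hl
    exact absurd (hb ▸ h) hok.1
  | bwd h w ih =>
    intro prev hok hl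
    obtain ⟨_, hfalse⟩ := ih false hok.2 hl
    simp at hfalse

private lemma sep_parents {E : V → V → Prop} {α β : V}
    (hne : α ≠ β) (hnab : ¬ E α β) :
    muSep E {α} {β} {γ | E γ β} := by
  rintro ⟨a, ⟨ha, -⟩, b, hb, w, hconn⟩
  rcases ha with rfl
  rcases hb with rfl
  cases w with
  | nil => exact hconn
  | fwd h w =>
    obtain ⟨hb, _⟩ := walk_aux w true hconn.2.1 hconn.2.2
    exact hnab (hb ▸ h)
  | bwd h w =>
    obtain ⟨_, hfalse⟩ := walk_aux w false hconn.2.1 hconn.2.2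
    simp at hfalse

/-- if `D` has order at most `m` and `I` is Markov with respect
to `D`, then the output of the dSGS algorithm with parameter `k = m` — which
contains `α → β` (`α ≠ β`) iff there is no `C ⊆ V ∖ {α}` with `|C| ≤ m` and
`(α, β, C) ∈ I` — is a subgraph of `D`. -/
theorem stmt13 {V : Type*} [Fintype V] (E : V → V → Prop) (I : IndepModel V)
    (m : ℕ) (hself : ∀ v, E v v)
    (horder : ∀ α β : V, α ≠ β → order E α β ≠ ⊤ → order E α β ≤ (m : ℕ∞))
    (hMarkov : ID E ⊆ I)
    (E' : V → V → Prop)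
    (hE' : ∀ α β : V, α ≠ β →
      (E' α β ↔ ¬ ∃ C : Set V, C ⊆ {α}ᶜ ∧ C.ncard ≤ m ∧ ({α}, {β}, C) ∈ I)) :
    ∀ α β : V, α ≠ β → E' α β → E α β := by
  intro α β hne hE'ab
  by_contra hnab
  set C0 : Set V := {γ | E γ β} with hC0
  have hsep : muSep E {α} {β} C0 := sep_parents hne hnab
  have hC0sub : C0 ⊆ {α}ᶜ := by
    intro γ hγ
    simp only [Set.mem_compl_iff, Set.mem_singleton_iff]
    rintro rfl
    exact hnab hγ
  have hC0mem : C0 ∈ {C : Set V | C ⊆ {α}ᶜ ∧ muSep E {α} {β} C} := ⟨hC0sub, hsep⟩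
  have hfin : order E α β ≠ ⊤ := by
    intro htop
    have : order E α β ≤ (C0.ncard : ℕ∞) := biInf_le _ hC0mem
    rw [htop] at this
    exact (ENat.coe_lt_top C0.ncard).not_ge (le_of_eq (top_le_iff.mp this).symm)
  have hle : order E α β ≤ (m : ℕ∞) := horder α β hne hfin
  -- extract a witness with ncard ≤ m
  have hwit : ∃ C : Set V, C ⊆ {α}ᶜ ∧ C.ncard ≤ m ∧ muSep E {α} {β} C := by
    by_contra hno
    push_neg at hno
    have hbig : ((m + 1 : ℕ) : ℕ∞) ≤ order E α β := by
      apply le_iInf₂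
      rintro C ⟨hsub, hsepC⟩
      have := hno C hsub
      have hm : m + 1 ≤ C.ncard := by
        by_contra hcon
        exact this (by omega) hsepC
      exact_mod_cast hm
    have : ((m + 1 : ℕ) : ℕ∞) ≤ (m : ℕ∞) := hbig.trans hle
    have : m + 1 ≤ m := by exact_mod_cast this
    omega
  obtain ⟨C, hsub, hcard, hsepC⟩ := hwit
  have hI : ({α}, {β}, C) ∈ I := hMarkov hsepC
  exact ((hE' α β hne).mp hE'ab) ⟨C, hsub, hcard, hI⟩
end
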